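/- The swap vertices of the Grigorchuk generator c are exactly the words 1^k 0 (k ones followed by a zero) with k ≡ 0 or 2 (mod 3): a binary word v satisfies c(v) = v and c(v·0) = v·1 if and only if v = 1^k 0 for some k ≥ 0 with k ≡ 0 or 2 (mod 3). -/
import Mathlib


/-- The Grigorchuk generator `a`: flips the first bit of a nonempty binary word. -/
def grigA : List Bool → List Bool
  | [] => []
  | false :: w => true :: w
  | true :: w => false :: w

mutual
  /-- The Grigorchuk generator `b`. -/
  def grigB : List Bool → List Bool
    | [] => []
    | false :: w => false :: grigA w
    | true :: w => true :: grigC w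
  /-- The Grigorchuk generator `c`. -/
  def grigC : List Bool → List Bool
    | [] => []
    | false :: w => false :: grigA w
    | true :: w => true :: grigD w
  /-- The Grigorchuk generator `d`. -/
  def grigD : List Bool → List Bool
    | [] => []
    | false :: w => false :: w
    | true :: w => true :: grigB w
end

theorem grigA_involutive : Function.Involutive grigA := by
  intro w
  match w with
  | [] => rfl
  | false :: w => rfl
  | true :: w => rfl

theorem grigBCD_involutive : ∀ w : List Bool,
    grigB (grigB w) = w ∧ grigC (grigC w) = w ∧ grigD (grigD w) = w
  | [] => ⟨rfl, rfl, rfl⟩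
  | false :: w => by
      simp [grigB, grigC, grigD, grigA_involutive w]
  | true :: w => by
      obtain ⟨hb, hc, hd⟩ := grigBCD_involutive w
      simp [grigB, grigC, grigD, hb, hc, hd]

theorem grigB_involutive : Function.Involutive grigB :=
  fun w => (grigBCD_involutive w).1

theorem grigC_involutive : Function.Involutive grigC :=
  fun w => (grigBCD_involutive w).2.1

theorem grigD_involutive : Function.Involutive grigD :=
  fun w => (grigBCD_involutive w).2.2

lemma grigA_fix (w : List Bool) : grigA w = w ↔ w = [] := by
  cases w with
  | nil => simp [grigA]
  | cons b w => cases b <;> simp [grigA]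

lemma cons_true_eq_rep (w : List Bool) (P : ℕ → Prop) :
    (∃ k : ℕ, P k ∧ true :: w = List.replicate k true ++ [false]) ↔
      ∃ k : ℕ, P (k + 1) ∧ w = List.replicate k true ++ [false] := by
  constructor
  · rintro ⟨k, hk, hv⟩
    cases k with
    | zero => simp at hv
    | succ k => exact ⟨k, hk, by simpa [List.replicate_succ] using hv⟩
  · rintro ⟨k, hk, hv⟩
    exact ⟨k + 1, hk, by simp [List.replicate_succ, hv]⟩

lemma cons_false_eq_rep (w : List Bool) (k : ℕ) :
    false :: w = List.replicate k true ++ [false] ↔ k = 0 ∧ w = [] := by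
  cases k <;> simp [List.replicate_succ]

lemma grig_swap_key : ∀ v : List Bool,
    ((grigB v = v ∧ grigB (v ++ [false]) = v ++ [true]) ↔
      ∃ k : ℕ, (k % 3 = 0 ∨ k % 3 = 1) ∧ v = List.replicate k true ++ [false]) ∧
    ((grigC v = v ∧ grigC (v ++ [false]) = v ++ [true]) ↔
      ∃ k : ℕ, (k % 3 = 0 ∨ k % 3 = 2) ∧ v = List.replicate k true ++ [false]) ∧
    ((grigD v = v ∧ grigD (v ++ [false]) = v ++ [true]) ↔
      ∃ k : ℕ, (k % 3 = 1 ∨ k % 3 = 2) ∧ v = List.replicate k true ++ [false])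
  | [] => by
      refine ⟨?_, ?_, ?_⟩ <;>
      · constructor
        · rintro ⟨h1, h2⟩
          simp [grigB, grigC, grigD, grigA] at h2
        · rintro ⟨k, hk, hv⟩
          have : (List.replicate k true ++ [false]).length = 0 := by rw [← hv]; rfl
          simp at this
  | false :: w => by
      refine ⟨?_, ?_, ?_⟩
      · constructor
        · rintro ⟨h1, h2⟩
          have hw : w = [] := by
            simpa [grigB, grigA_fix] using h1
          subst hw
          exact ⟨0, Or.inl rfl, rfl⟩
        · rintro ⟨k, hk, hv⟩
          rw [cons_false_eq_rep] at hv
          obtain ⟨hk0, hw⟩ := hv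
          subst hw
          exact ⟨rfl, rfl⟩
      · constructor
        · rintro ⟨h1, h2⟩
          have hw : w = [] := by
            simpa [grigC, grigA_fix] using h1
          subst hw
          exact ⟨0, Or.inl rfl, rfl⟩
        · rintro ⟨k, hk, hv⟩
          rw [cons_false_eq_rep] at hv
          obtain ⟨hk0, hw⟩ := hv
          subst hw
          exact ⟨rfl, rfl⟩
      · constructor
        · rintro ⟨h1, h2⟩
          simp [grigD] at h2
        · rintro ⟨k, hk, hv⟩
          rw [cons_false_eq_rep] at hv
          obtain ⟨hk0, hw⟩ := hv
          subst hk0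
          omega
  | true :: w => by
      obtain ⟨ihB, ihC, ihD⟩ := grig_swap_key w
      refine ⟨?_, ?_, ?_⟩
      · rw [show (true :: w) ++ [false] = true :: (w ++ [false]) from rfl,
          show (true :: w) ++ [true] = true :: (w ++ [true]) from rfl]
        simp only [grigB, List.cons.injEq, true_and]
        rw [ihC, cons_true_eq_rep]
        constructor <;>
        · rintro ⟨k, hk, hv⟩
          exact ⟨k, by omega, hv⟩
      · rw [show (true :: w) ++ [false] = true :: (w ++ [false]) from rfl,
          show (true :: w) ++ [true] = true :: (w ++ [true]) from rfl]
        simp only [grigC, List.cons.injEq, true_and]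
        rw [ihD, cons_true_eq_rep]
        constructor <;>
        · rintro ⟨k, hk, hv⟩
          exact ⟨k, by omega, hv⟩
      · rw [show (true :: w) ++ [false] = true :: (w ++ [false]) from rfl,
          show (true :: w) ++ [true] = true :: (w ++ [true]) from rfl]
        simp only [grigD, List.cons.injEq, true_and]
        rw [ihB, cons_true_eq_rep]
        constructor <;>
        · rintro ⟨k, hk, hv⟩
          exact ⟨k, by omega, hv⟩

/-- The swap vertices of the Grigorchuk generator `c` are exactly the words
`1^k 0` with `k ≡ 0` or `2 (mod 3)`. -/
theorem grigC_swap_vertices :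
    ∀ v : List Bool,
      (grigC v = v ∧ grigC (v ++ [false]) = v ++ [true]) ↔
        ∃ k : ℕ, (k % 3 = 0 ∨ k % 3 = 2) ∧ v = List.replicate k true ++ [false] := by
  exact fun v => (grig_swap_key v).2.1
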